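/- Let ρ be a congruence on the monoid M presented by ⟨x, y, e | e³ = e, xey = y, xe²y = x, xy = 1⟩. If x ρ 1, then ρ is the universal congruence M × M. -/

import Mathlib

/-- The alphabet `A = {x, y, e}`. -/
inductive Alpha : Type
  | x | y | e
  deriving DecidableEq

/-- The defining relations `e³ = e`, `xey = y`, `xe²y = x`, `xy = 1`. -/
def rel : FreeMonoid Alpha → FreeMonoid Alpha → Prop := fun a b =>
  (a = .of .e * .of .e * .of .e ∧ b = .of .e) ∨
  (a = .of .x * .of .e * .of .y ∧ b = .of .y) ∨
  (a = .of .x * .of .e * .of .e * .of .y ∧ b = .of .x) ∨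
  (a = .of .x * .of .y ∧ b = 1)

/-- The monoid `M = ⟨x, y, e | e³ = e, xey = y, xe²y = x, xy = 1⟩`. -/
abbrev M := PresentedMonoid rel

/-- The image of `x` in `M`. -/
def X : M := PresentedMonoid.of rel .x
/-- The image of `y` in `M`. -/
def Y : M := PresentedMonoid.of rel .y
/-- The image of `e` in `M`. -/
def E : M := PresentedMonoid.of rel .e

/-! A congruence is the kernel of its quotient map, so it suffices to show that every monoid
homomorphism killing `x` is trivial. Such a homomorphism kills `y` because `xy = 1`, and then
kills `e` because `xey = y`; since `x`, `y`, `e` generate `M`, it is trivial. -/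

lemma X_mul_Y : X * Y = 1 :=
  PresentedMonoid.mk_eq_mk_of_rel (Or.inr (Or.inr (Or.inr ⟨rfl, rfl⟩)))

lemma X_mul_E_mul_Y : X * E * Y = Y :=
  PresentedMonoid.mk_eq_mk_of_rel (Or.inr (Or.inl ⟨rfl, rfl⟩))

lemma Con.eq_top_of_mk'_eq_one {N : Type*} [Monoid N] {c : Con N} (h : c.mk' = 1) : c = ⊤ := by
  rw [eq_top_iff]
  intro a b _
  exact c.eq.1 ((DFunLike.congr_fun h a).trans (DFunLike.congr_fun h b).symm)

lemma eq_one_of_map_X_eq_one {N : Type*} [Monoid N] {f : M →* N} (hX : f X = 1) : f = 1 := by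
  have hY : f Y = 1 := by simpa [hX] using congrArg f X_mul_Y
  have hE : f E = 1 := by simpa [hX, hY] using congrArg f X_mul_E_mul_Y
  ext c
  cases c
  exacts [hX, hY, hE]

/-- If a congruence on `M` relates `x` and `1`, it is universal. -/
theorem stmt_14 : ∀ ρ : Con M, ρ X 1 → ρ = ⊤ := by
  intro ρ hX
  exact Con.eq_top_of_mk'_eq_one (eq_one_of_map_X_eq_one (ρ.eq.2 hX))
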